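/- arXiv:2511.03297 — 2 statements merged into one kernel-verified Lean document; each statement's English description precedes it below -/
import Mathlib

section
/- Let Q be the generator matrix of a continuous-time Markov chain on a finite state space (i.e., Q has nonnegative off-diagonal entries and each column sums to zero), and suppose the eigenspace of Q associated with eigenvalue 0 is one-dimensional. Then every nonzero eigenvalue of Q has strictly negative real part. -/
/-!
By Gershgorin's theorem applied to the columns of `Q`, every eigenvalue lies in a closed disc
centred at some diagonal entry `Q k k` with radius `∑_{i ≠ k} Q i k = -Q k k`. Such a disc lies
in the closed left half-plane and meets the imaginary axis only at `0`.
-/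

open Matrix Module.End

theorem Matrix.hasEigenvalue_toLin'_transpose_iff {K n : Type*} [Field K] [Fintype n]
    [DecidableEq n] (A : Matrix n n K) (μ : K) :
    HasEigenvalue (toLin' Aᵀ) μ ↔ HasEigenvalue (toLin' A) μ := by
  simp only [hasEigenvalue_iff_isRoot_charpoly, charpoly_toLin', charpoly_transpose]

theorem Matrix.eigenvalue_mem_ball_col {K n : Type*} [NormedField K] [Fintype n]
    [DecidableEq n] {A : Matrix n n K} {μ : K} (hμ : HasEigenvalue (toLin' A) μ) :
    ∃ k, μ ∈ Metric.closedBall (A k k) (∑ i ∈ Finset.univ.erase k, ‖A i k‖) :=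
  eigenvalue_mem_ball ((hasEigenvalue_toLin'_transpose_iff A μ).mpr hμ)

theorem Complex.re_neg_of_norm_sub_ofReal_le_neg {μ : ℂ} {c : ℝ} (h : ‖μ - c‖ ≤ -c)
    (hμ : μ ≠ 0) : μ.re < 0 := by
  have hc : c ≤ 0 := neg_nonneg.mp ((norm_nonneg _).trans h)
  have hsq : (μ.re - c) ^ 2 + μ.im ^ 2 ≤ c ^ 2 := by
    have := pow_le_pow_left₀ (norm_nonneg _) h 2
    rwa [Complex.sq_norm, normSq_apply, sub_re, sub_im, ofReal_re, ofReal_im, sub_zero, ← sq, ← sq,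
      neg_sq] at this
  by_contra! hre
  have hzero : μ.re ^ 2 + μ.im ^ 2 ≤ 0 := by nlinarith [mul_nonneg hre (neg_nonneg.mpr hc)]
  exact hμ (Complex.ext (by rw [zero_re]; nlinarith [sq_nonneg μ.im])
    (by rw [zero_im]; nlinarith [sq_nonneg μ.re]))

theorem Matrix.exists_norm_sub_diag_le_neg_diag {n : Type*} [Fintype n] [DecidableEq n]
    {Q : Matrix n n ℝ} (hoff : ∀ i j, i ≠ j → 0 ≤ Q i j) (hcol : ∀ j, ∑ i, Q i j = 0) {μ : ℂ}
    (hμ : HasEigenvalue (toLin' (Q.map ((↑) : ℝ → ℂ))) μ) :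
    ∃ k, ‖μ - Q k k‖ ≤ -Q k k := by
  obtain ⟨k, hk⟩ := eigenvalue_mem_ball_col hμ
  have hrad : ∑ i ∈ Finset.univ.erase k, ‖(Q i k : ℂ)‖ = -Q k k := by
    rw [eq_neg_iff_add_eq_zero, add_comm, ← hcol k, ← Finset.add_sum_erase _ _ (Finset.mem_univ k)]
    congr 1
    exact Finset.sum_congr rfl fun i hi ↦
      Complex.norm_of_nonneg (hoff i k (Finset.ne_of_mem_erase hi))
  exact ⟨k, by simpa only [mem_closedBall_iff_norm, map_apply, hrad] using hk⟩

theorem stmt0_general {p : ℕ} (Q : Matrix (Fin p) (Fin p) ℝ)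
    (hoff : ∀ i j, i ≠ j → 0 ≤ Q i j)
    (hcol : ∀ j, ∑ i, Q i j = 0) :
    ∀ (μ : ℂ) (v : Fin p → ℂ), v ≠ 0 →
      (Q.map (fun a => (a : ℂ))).mulVec v = μ • v → μ ≠ 0 → μ.re < 0 := by
  intro μ v hv heig hμ
  have hμQ : HasEigenvalue (toLin' (Q.map ((↑) : ℝ → ℂ))) μ :=
    hasEigenvalue_of_hasEigenvector ⟨mem_eigenspace_iff.mpr heig, hv⟩
  obtain ⟨k, hk⟩ := exists_norm_sub_diag_le_neg_diag hoff hcol hμQ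
  exact Complex.re_neg_of_norm_sub_ofReal_le_neg hk hμ

/-- A generator matrix (column convention) with one-dimensional kernel has all
nonzero eigenvalues with strictly negative real part. -/
theorem stmt0 {p : ℕ} (Q : Matrix (Fin p) (Fin p) ℝ)
    (hoff : ∀ i j, i ≠ j → 0 ≤ Q i j)
    (hcol : ∀ j, ∑ i, Q i j = 0)
    (hker : Module.finrank ℝ (LinearMap.ker (Matrix.toLin' Q)) = 1) :
    ∀ (μ : ℂ) (v : Fin p → ℂ), v ≠ 0 →
      (Q.map (fun a => (a : ℂ))).mulVec v = μ • v → μ ≠ 0 → μ.re < 0 :=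
  stmt0_general Q hoff hcol
end

section
/- Let V : D → ℝ≥0 be C¹ on an open set D ⊆ ℝ^n containing a compact set M, with V = 0 exactly on M, V̇(x) := ∇V(x)ᵀ f(x) ≤ -γ₁ d_M(x)² on D, and ‖∇V(x)‖ ≤ γ₂ d_M(x) on D, where d_M(x) = inf_{y ∈ M} ‖x − y‖. Let W(z) = zᵀ P z be a Lyapunov function for ż = (1/ε) A z with A Hurwitz, P A + AᵀP = -R, R ≻ 0. Then for the coupled system ẋ = f(x) + g₁(x,z), ε ż = A z + ε g₂(x,z), with g₁, g₂ Lipschitz in (x,z) and g₁(x,0) = 0, g₂(x*,0) = 0 for x* ∈ M, the weighted sum ν(x,z) = (1−θ)V(x) + θ W(z) satisfies, for suitable θ ∈ (0,1) and all sufficiently small ε > 0, ν̇(x,z) ≤ -c (d_M(x)² + ‖z‖²) for some c > 0 on a neighborhood of M × {0}. -/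
/-!
Along the coupled vector field the slow part of `ν̇` is at most `-γ₁ d² + γ₂ L d ‖z‖`, by the
bounds on `V̇` and `∇V` and `‖g₁ (x, z)‖ ≤ L ‖z‖`. The fast part is at most
`-ε⁻¹ μ ‖z‖² + 2 ‖P‖ L ‖z‖ (d + ‖z‖)`: the Lyapunov equation turns `ε⁻¹ ∇W · A z` into
`-ε⁻¹ zᵀ R z ≤ -ε⁻¹ μ ‖z‖²` (compactness of the unit sphere), and comparing with a nearest
point of `M` gives `‖g₂ (x, z)‖ ≤ L (d + ‖z‖)`. With `θ = 1/2`, Young's inequality absorbs the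
cross term `d ‖z‖` once `ε⁻¹ μ` is large, which leaves `-(γ₁ / 4) (d² + ‖z‖²)` on all of
`D × ℝᵏ`.
-/

open Matrix RealInnerProductSpace

section Matrix

variable {ι : Type*} [Fintype ι] [DecidableEq ι]

theorem Matrix.inner_toEuclideanLin_mul_add_inner_toEuclideanLin_eq_neg
    {A P R : Matrix ι ι ℝ} (h : P * A + Aᵀ * P = -R) (z : EuclideanSpace ℝ ι) :
    ⟪z, toEuclideanLin P (toEuclideanLin A z)⟫ + ⟪toEuclideanLin A z, toEuclideanLin P z⟫ =
      -⟪z, toEuclideanLin R z⟫ := by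
  simp only [EuclideanSpace.inner_eq_star_dotProduct, ofLp_toLpLin, toLin'_apply, star_trivial,
    mulVec_mulVec]
  rw [dotProduct_mulVec (P *ᵥ _) A, ← mulVec_transpose, mulVec_mulVec,
    ← add_dotProduct, ← add_mulVec, h, neg_mulVec, neg_dotProduct]

theorem Matrix.PosDef.inner_toEuclideanLin_pos {R : Matrix ι ι ℝ} (hR : R.PosDef)
    {z : EuclideanSpace ℝ ι} (hz : z ≠ 0) : 0 < ⟪z, toEuclideanLin R z⟫ := by
  rw [EuclideanSpace.inner_eq_star_dotProduct, ofLp_toLpLin, toLin'_apply, dotProduct_comm]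
  exact hR.dotProduct_mulVec_pos (by simpa using hz)

end Matrix

section InnerProductSpace

variable {F : Type*} [NormedAddCommGroup F] [InnerProductSpace ℝ F]

theorem LinearMap.exists_pos_mul_norm_sq_le_inner [FiniteDimensional ℝ F] (T : F →ₗ[ℝ] F)
    (hT : ∀ z ≠ 0, 0 < ⟪z, T z⟫) : ∃ c > 0, ∀ z, c * ‖z‖ ^ 2 ≤ ⟪z, T z⟫ := by
  rcases subsingleton_or_nontrivial F with _ | _
  · exact ⟨1, one_pos, fun z => by simp [Subsingleton.elim z 0]⟩
  obtain ⟨u, hu, hmin⟩ := (isCompact_sphere (0 : F) 1).exists_isMinOn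
    (NormedSpace.sphere_nonempty.mpr zero_le_one)
    (continuous_id.inner T.continuous_of_finiteDimensional :
      Continuous fun z : F => ⟪z, T z⟫).continuousOn
  refine ⟨⟪u, T u⟫, hT u (ne_zero_of_mem_unit_sphere ⟨u, hu⟩), fun z => ?_⟩
  rcases eq_or_ne z 0 with rfl | hz
  · simp
  have hz' : 0 < ‖z‖ := norm_pos_iff.mpr hz
  have hscale : ⟪z, T z⟫ = ‖z‖ ^ 2 * ⟪‖z‖⁻¹ • z, T (‖z‖⁻¹ • z)⟫ := by
    rw [map_smul, real_inner_smul_left, real_inner_smul_right]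
    field_simp
  have hmin_z : ⟪u, T u⟫ ≤ ⟪‖z‖⁻¹ • z, T (‖z‖⁻¹ • z)⟫ := hmin (by simp [norm_smul, hz'.ne'])
  rw [hscale]
  exact (mul_comm _ _).trans_le (mul_le_mul_of_nonneg_left hmin_z (sq_nonneg _))

theorem fderiv_inner_self_apply (T : F →L[ℝ] F) (z v : F) :
    fderiv ℝ (fun z => ⟪z, T z⟫) z v = ⟪z, T v⟫ + ⟪v, T z⟫ := by
  rw [fderiv_inner_apply ℝ differentiableAt_fun_id T.differentiableAt v, fderiv_fun_id, T.fderiv]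
  simp

theorem norm_fderiv_inner_self_le (T : F →L[ℝ] F) (z : F) :
    ‖fderiv ℝ (fun z => ⟪z, T z⟫) z‖ ≤ 2 * ‖T‖ * ‖z‖ := by
  refine ContinuousLinearMap.opNorm_le_bound _ (by positivity) fun v => ?_
  rw [fderiv_inner_self_apply, Real.norm_eq_abs]
  refine (abs_add_le _ _).trans ?_
  have h₁ := abs_real_inner_le_norm z (T v)
  have h₂ := abs_real_inner_le_norm v (T z)
  have h₃ := T.le_opNorm v
  have h₄ := T.le_opNorm z
  nlinarith [norm_nonneg z, norm_nonneg v, norm_nonneg T]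

end InnerProductSpace

theorem ContinuousLinearMap.map_add_le {E : Type*} [SeminormedAddCommGroup E] [NormedSpace ℝ E]
    (ℓ : E →L[ℝ] ℝ) {u w : E} {a b c : ℝ} (hu : ℓ u ≤ a) (hℓ : ‖ℓ‖ ≤ b) (hw : ‖w‖ ≤ c) :
    ℓ (u + w) ≤ a + b * c := by
  have hℓw : ℓ w ≤ b * c := (Real.le_norm_self _).trans <| (ℓ.le_opNorm w).trans <|
    mul_le_mul hℓ hw (norm_nonneg w) ((norm_nonneg ℓ).trans hℓ)
  rw [map_add]
  linarith

section Lipschitz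

variable {E F G : Type*} [PseudoMetricSpace E] [NormedAddCommGroup F] [NormedAddCommGroup G]
  {g : E × F → G} {L : NNReal}

theorem LipschitzWith.norm_le_mul_norm_of_map_zero (hg : LipschitzWith L g)
    (hg0 : ∀ x, g (x, 0) = 0) (x : E) (z : F) : ‖g (x, z)‖ ≤ L * ‖z‖ := by
  simpa [hg0, Prod.dist_eq] using hg.dist_le_mul (x, z) (x, 0)

theorem LipschitzWith.norm_le_mul_infDist_add_norm {M : Set E} (hM : IsCompact M)
    (hMne : M.Nonempty) (hg : LipschitzWith L g) (hg0 : ∀ x ∈ M, g (x, 0) = 0) (x : E) (z : F) :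
    ‖g (x, z)‖ ≤ L * (Metric.infDist x M + ‖z‖) := by
  obtain ⟨y, hy, hxy⟩ := hM.exists_infDist_eq_dist hMne x
  have h := hg.dist_le_mul (x, z) (y, 0)
  rw [hg0 y hy, dist_zero_right, Prod.dist_eq, dist_zero_right, ← hxy] at h
  refine h.trans (mul_le_mul_of_nonneg_left ?_ L.coe_nonneg)
  exact max_le_add_of_nonneg Metric.infDist_nonneg (norm_nonneg z)

end Lipschitz

-- Young: `C d r ≤ (γ / 2) d² + (C² / 2γ) r²`.
theorem neg_mul_sq_add_mul_sub_mul_sq_le {γ C κ d r : ℝ} (hγ : 0 < γ)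
    (hκ : C ^ 2 / (2 * γ) + γ / 2 ≤ κ) :
    -γ * d ^ 2 + C * (d * r) - κ * r ^ 2 ≤ -(γ / 2) * (d ^ 2 + r ^ 2) := by
  rw [div_add_div _ _ (by positivity) two_ne_zero, div_le_iff₀ (by positivity)] at hκ
  nlinarith [sq_nonneg (γ * d - C * r), sq_nonneg r]

theorem stmt14_general {n k : ℕ}
    (Mset : Set (EuclideanSpace ℝ (Fin n))) (hMc : IsCompact Mset) (hMne : Mset.Nonempty)
    (D : Set (EuclideanSpace ℝ (Fin n))) (hD : IsOpen D) (hMD : Mset ⊆ D)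
    (V : EuclideanSpace ℝ (Fin n) → ℝ)
    (f : EuclideanSpace ℝ (Fin n) → EuclideanSpace ℝ (Fin n))
    (γ₁ γ₂ : ℝ) (hγ₁ : 0 < γ₁)
    (hVdot : ∀ x ∈ D, fderiv ℝ V x (f x) ≤ -γ₁ * (Metric.infDist x Mset) ^ 2)
    (hVgrad : ∀ x ∈ D, ‖fderiv ℝ V x‖ ≤ γ₂ * Metric.infDist x Mset)
    (A R P : Matrix (Fin k) (Fin k) ℝ)
    (hR : R.PosDef) (hLyap : P * A + Aᵀ * P = -R)
    (W : EuclideanSpace ℝ (Fin k) → ℝ)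
    (hW : ∀ z, W z = ⟪z, Matrix.toEuclideanLin P z⟫)
    (g₁ : EuclideanSpace ℝ (Fin n) × EuclideanSpace ℝ (Fin k) → EuclideanSpace ℝ (Fin n))
    (g₂ : EuclideanSpace ℝ (Fin n) × EuclideanSpace ℝ (Fin k) → EuclideanSpace ℝ (Fin k))
    (L : NNReal) (hLg₁ : LipschitzWith L g₁)
    (hLg₂ : LipschitzWith L g₂)
    (hg₁0 : ∀ x, g₁ (x, 0) = 0) (hg₂0 : ∀ x ∈ Mset, g₂ (x, 0) = 0) :
    ∃ θ : ℝ, 0 < θ ∧ θ < 1 ∧ ∃ εstar > (0:ℝ), ∀ ε : ℝ, 0 < ε → ε < εstar →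
      ∃ c > (0:ℝ), ∃ N ∈ nhdsSet (Mset ×ˢ ({0} : Set (EuclideanSpace ℝ (Fin k)))),
        N ⊆ D ×ˢ (Set.univ : Set (EuclideanSpace ℝ (Fin k))) ∧
        ∀ q ∈ N,
          (1 - θ) * fderiv ℝ V q.1 (f q.1 + g₁ q) +
            θ * fderiv ℝ W q.2 (ε⁻¹ • (Matrix.toEuclideanLin A q.2) + g₂ q)
          ≤ -c * ((Metric.infDist q.1 Mset) ^ 2 + ‖q.2‖ ^ 2) := by
  obtain ⟨μ, hμ, hRμ⟩ := (toEuclideanLin R).exists_pos_mul_norm_sq_le_inner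
    fun z hz => hR.inner_toEuclideanLin_pos hz
  set T := (toEuclideanLin P).toContinuousLinearMap
  have hWT : W = fun z => ⟪z, T z⟫ := funext hW
  set C := γ₂ * L + 2 * ‖T‖ * L
  set κ := 2 * ‖T‖ * L + C ^ 2 / (2 * γ₁) + γ₁ / 2 with hκ_def
  refine ⟨1 / 2, by norm_num, by norm_num, μ / κ, by positivity, fun ε hε hεκ => ?_⟩
  refine ⟨γ₁ / 4, by positivity, D ×ˢ Set.univ,
    (hD.prod isOpen_univ).mem_nhdsSet.2 (Set.prod_mono hMD (Set.subset_univ _)), subset_rfl, ?_⟩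
  rintro ⟨x, z⟩ ⟨hx, -⟩
  set d := Metric.infDist x Mset
  have hslow : fderiv ℝ V x (f x + g₁ (x, z)) ≤ -γ₁ * d ^ 2 + γ₂ * d * (L * ‖z‖) :=
    (fderiv ℝ V x).map_add_le (hVdot x hx) (hVgrad x hx)
      (hLg₁.norm_le_mul_norm_of_map_zero hg₁0 x z)
  have hfast_lin : fderiv ℝ W z (ε⁻¹ • toEuclideanLin A z) ≤ ε⁻¹ * (-(μ * ‖z‖ ^ 2)) := by
    rw [map_smul, smul_eq_mul, hWT, fderiv_inner_self_apply]
    exact mul_le_mul_of_nonneg_left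
      ((inner_toEuclideanLin_mul_add_inner_toEuclideanLin_eq_neg hLyap z).trans_le
        (neg_le_neg (hRμ z))) (inv_nonneg.2 hε.le)
  have hfast : fderiv ℝ W z (ε⁻¹ • toEuclideanLin A z + g₂ (x, z)) ≤
      ε⁻¹ * (-(μ * ‖z‖ ^ 2)) + 2 * ‖T‖ * ‖z‖ * (L * (d + ‖z‖)) :=
    (fderiv ℝ W z).map_add_le hfast_lin (hWT ▸ norm_fderiv_inner_self_le T z)
      (hLg₂.norm_le_mul_infDist_add_norm hMc hMne hg₂0 x z)
  have hκ : κ ≤ ε⁻¹ * μ := by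
    rw [← div_eq_inv_mul, le_div_iff₀ hε]
    rw [lt_div_iff₀ (by positivity)] at hεκ
    linarith
  have hyoung := neg_mul_sq_add_mul_sub_mul_sq_le (C := C) (κ := ε⁻¹ * μ - 2 * ‖T‖ * L)
    (d := d) (r := ‖z‖) hγ₁ (by linarith [hκ_def])
  linear_combination (1 / 2 : ℝ) * (hslow + hfast + hyoung)

/-- Composite Lyapunov function for the singularly perturbed system
`ẋ = f(x) + g₁(x,z)`, `ε ż = A z + ε g₂(x,z)`: for a suitable weight `θ` and all
sufficiently small `ε`, `ν = (1-θ)V + θW` has derivative bounded by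
`-c (d_M(x)² + ‖z‖²)` on a neighborhood of `M × {0}`. -/
theorem stmt14 {n k : ℕ}
    (Mset : Set (EuclideanSpace ℝ (Fin n))) (hMc : IsCompact Mset) (hMne : Mset.Nonempty)
    (D : Set (EuclideanSpace ℝ (Fin n))) (hD : IsOpen D) (hMD : Mset ⊆ D)
    (V : EuclideanSpace ℝ (Fin n) → ℝ) (hV : ContDiffOn ℝ 1 V D)
    (hVnonneg : ∀ x ∈ D, 0 ≤ V x) (hVzero : ∀ x ∈ D, (V x = 0 ↔ x ∈ Mset))
    (f : EuclideanSpace ℝ (Fin n) → EuclideanSpace ℝ (Fin n))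
    (γ₁ γ₂ : ℝ) (hγ₁ : 0 < γ₁) (hγ₂ : 0 < γ₂)
    (hVdot : ∀ x ∈ D, fderiv ℝ V x (f x) ≤ -γ₁ * (Metric.infDist x Mset) ^ 2)
    (hVgrad : ∀ x ∈ D, ‖fderiv ℝ V x‖ ≤ γ₂ * Metric.infDist x Mset)
    (A R P : Matrix (Fin k) (Fin k) ℝ)
    (hHurwitz : ∀ (μ : ℂ) (v : Fin k → ℂ), v ≠ 0 →
      (A.map (fun a => (a : ℂ))).mulVec v = μ • v → μ.re < 0)
    (hR : R.PosDef) (hP : P.PosDef) (hLyap : P * A + Aᵀ * P = -R)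
    (W : EuclideanSpace ℝ (Fin k) → ℝ)
    (hW : ∀ z, W z = ⟪z, Matrix.toEuclideanLin P z⟫)
    (g₁ : EuclideanSpace ℝ (Fin n) × EuclideanSpace ℝ (Fin k) → EuclideanSpace ℝ (Fin n))
    (g₂ : EuclideanSpace ℝ (Fin n) × EuclideanSpace ℝ (Fin k) → EuclideanSpace ℝ (Fin k))
    (L : NNReal) (hLf : LipschitzWith L f) (hLg₁ : LipschitzWith L g₁)
    (hLg₂ : LipschitzWith L g₂)
    (hg₁0 : ∀ x, g₁ (x, 0) = 0) (hg₂0 : ∀ x ∈ Mset, g₂ (x, 0) = 0) :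
    ∃ θ : ℝ, 0 < θ ∧ θ < 1 ∧ ∃ εstar > (0:ℝ), ∀ ε : ℝ, 0 < ε → ε < εstar →
      ∃ c > (0:ℝ), ∃ N ∈ nhdsSet (Mset ×ˢ ({0} : Set (EuclideanSpace ℝ (Fin k)))),
        N ⊆ D ×ˢ (Set.univ : Set (EuclideanSpace ℝ (Fin k))) ∧
        ∀ q ∈ N,
          (1 - θ) * fderiv ℝ V q.1 (f q.1 + g₁ q) +
            θ * fderiv ℝ W q.2 (ε⁻¹ • (Matrix.toEuclideanLin A q.2) + g₂ q)
          ≤ -c * ((Metric.infDist q.1 Mset) ^ 2 + ‖q.2‖ ^ 2) :=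
  stmt14_general Mset hMc hMne D hD hMD V f γ₁ γ₂ hγ₁ hVdot hVgrad A R P hR hLyap W hW g₁ g₂ L hLg₁
    hLg₂ hg₁0 hg₂0
end
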